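/- In the rewrite game with rules a^k → ε and b^ℓ → ε (for fixed positive integers k, ℓ) over alphabet {a,b}, every maximal play from a starting word w consists of exactly the same number of moves, namely α + β, where α and β are determined by the unique irreducible word reachable from w; consequently the Grundy value of w is the parity (0 or 1) of this number of moves. -/
import Mathlib

inductive AB | a | b
deriving DecidableEq

/-- One move of the game `{a^k → ε, b^ℓ → ε}`. -/
def Step (k l : ℕ) (w w' : List AB) : Prop :=
  ∃ x y : List AB, w' = x ++ y ∧
    (w = x ++ List.replicate k AB.a ++ y ∨ w = x ++ List.replicate l AB.b ++ y)

/-- `Play step w n` holds if there is a maximal play of exactly `n` moves from `w`. -/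
inductive Play (step : List AB → List AB → Prop) : List AB → ℕ → Prop
  | final (w : List AB) (h : ∀ w', ¬ step w w') : Play step w 0
  | move (w w' : List AB) (n : ℕ) (h : step w w') (hp : Play step w' n) :
      Play step w (n + 1)

/-- The minimum excluded value of a set of naturals. -/
noncomputable def mex (S : Set ℕ) : ℕ := sInf {n | n ∉ S}

/-- `g` is the Grundy function of the game with moves `step`. -/
def IsGrundy (step : List AB → List AB → Prop) (g : List AB → ℕ) : Prop :=
  ∀ w, g w = mex (g '' {w' | step w w'})

namespace RW

def cnt (k l : ℕ) : AB → ℕ | AB.a => k | AB.b => l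

def push (k l : ℕ) (c : AB) (s : List AB) : List AB :=
  if List.replicate (cnt k l c - 1) c <+: s then s.drop (cnt k l c - 1) else c :: s

def nf (k l : ℕ) (w : List AB) : List AB := w.foldr (push k l) []

def Red (k l : ℕ) (w : List AB) : Prop :=
  ∀ c, ¬ (List.replicate (cnt k l c) c <:+: w)

variable {k l : ℕ}

lemma cnt_pos (hk : 0 < k) (hl : 0 < l) (c : AB) : 0 < cnt k l c := by
  cases c <;> simpa [cnt]

lemma step_iff {w w' : List AB} :
    Step k l w w' ↔ ∃ c x y, w' = x ++ y ∧ w = x ++ List.replicate (cnt k l c) c ++ y := by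
  constructor
  · rintro ⟨x, y, rfl, h | h⟩
    · exact ⟨AB.a, x, y, rfl, h⟩
    · exact ⟨AB.b, x, y, rfl, h⟩
  · rintro ⟨c, x, y, rfl, rfl⟩
    cases c
    · exact ⟨x, y, rfl, Or.inl rfl⟩
    · exact ⟨x, y, rfl, Or.inr rfl⟩

lemma exists_step_iff_not_red {w : List AB} :
    (∃ w', Step k l w w') ↔ ¬ Red k l w := by
  constructor
  · rintro ⟨w', hw'⟩ hred
    obtain ⟨c, x, y, rfl, rfl⟩ := step_iff.mp hw'
    exact hred c ⟨x, y, rfl⟩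
  · intro h
    rw [Red] at h
    push_neg at h
    obtain ⟨c, hc⟩ := h
    obtain ⟨x, y, hxy⟩ := hc
    exact ⟨x ++ y, step_iff.mpr ⟨c, x, y, rfl, by rw [← hxy]⟩⟩

lemma red_of_no_step {w : List AB} (h : ∀ w', ¬ Step k l w w') : Red k l w := by
  by_contra hred
  obtain ⟨w', hw'⟩ := exists_step_iff_not_red.mpr hred
  exact h w' hw'

lemma red_tail {c : AB} {t : List AB} (h : Red k l (c :: t)) : Red k l t :=
  fun c' hc' => h c' (List.infix_cons hc')

lemma push_pop (c : AB) (s : List AB) :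
    push k l c (List.replicate (cnt k l c - 1) c ++ s) = s := by
  rw [push, if_pos (List.prefix_append _ _)]
  simp [List.drop_append]

lemma buildup (c : AB) {rest : List AB}
    (hrest : ∀ t, rest ≠ c :: t) :
    ∀ j, j ≤ cnt k l c - 1 → (push k l c)^[j] rest = List.replicate j c ++ rest := by
  intro j
  induction j with
  | zero => simp
  | succ j ih =>
    intro hj
    have hj' : j ≤ cnt k l c - 1 := Nat.le_of_succ_le hj
    rw [Function.iterate_succ_apply', ih hj', push, if_neg, List.replicate_succ]
    · rfl
    intro hpre
    obtain ⟨t, ht⟩ := hpre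
    have h2 := congrArg (List.drop j) ht
    rw [List.drop_append, List.drop_append] at h2
    simp only [List.length_replicate, List.drop_replicate, Nat.sub_self,
      Nat.sub_eq_zero_of_le hj', List.drop_zero, List.replicate_zero, List.nil_append] at h2
    have hpos : 0 < cnt k l c - 1 - j := by omega
    obtain ⟨m, hm⟩ : ∃ m, cnt k l c - 1 - j = m + 1 := ⟨_, (Nat.succ_pred_eq_of_pos hpos).symm⟩
    rw [hm, List.replicate_succ] at h2
    exact hrest _ h2.symm

/-- decompose any word as a maximal run of `c`'s followed by a rest not starting with `c`. -/
lemma exists_run (c : AB) (s : List AB) :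
    ∃ j rest, s = List.replicate j c ++ rest ∧ ∀ t, rest ≠ c :: t := by
  induction s with
  | nil => exact ⟨0, [], by simp, fun t h => by cases h⟩
  | cons c' s ih =>
    by_cases hc : c' = c
    · subst hc
      obtain ⟨j, rest, hs, hrest⟩ := ih
      exact ⟨j + 1, rest, by rw [List.replicate_succ, List.cons_append, hs], hrest⟩
    · exact ⟨0, c' :: s, by simp, fun t h => hc (by injection h)⟩

lemma pushes_cancel (hk : 0 < k) (hl : 0 < l) (c : AB) {s : List AB} (hs : Red k l s) :
    (push k l c)^[cnt k l c] s = s := by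
  obtain ⟨j, rest, rfl, hrest⟩ := exists_run c s
  have hcnt := cnt_pos hk hl c
  have hj : j ≤ cnt k l c - 1 := by
    by_contra hjc
    push_neg at hjc
    have hle : cnt k l c ≤ j := by omega
    refine hs c (List.IsPrefix.isInfix ⟨List.replicate (j - cnt k l c) c ++ rest, ?_⟩)
    rw [← List.append_assoc, ← List.replicate_add]
    congr 2
    omega
  have key : (push k l c)^[cnt k l c] rest = rest := by
    obtain ⟨m, hm⟩ : ∃ m, cnt k l c = m + 1 := ⟨_, (Nat.succ_pred_eq_of_pos hcnt).symm⟩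
    have hm1 : m = cnt k l c - 1 := by omega
    rw [hm, Function.iterate_succ_apply', buildup c hrest m (by omega), hm1, push_pop]
  calc (push k l c)^[cnt k l c] (List.replicate j c ++ rest)
      = (push k l c)^[cnt k l c] ((push k l c)^[j] rest) := by rw [buildup c hrest j hj]
    _ = (push k l c)^[j] ((push k l c)^[cnt k l c] rest) := by
        rw [← Function.iterate_add_apply, ← Function.iterate_add_apply, Nat.add_comm]
    _ = List.replicate j c ++ rest := by rw [key, buildup c hrest j hj]

lemma red_nil (hk : 0 < k) (hl : 0 < l) : Red k l [] := by
  intro c h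
  have h2 := List.eq_nil_of_infix_nil h
  have hcnt := cnt_pos hk hl c
  rw [List.replicate_eq_nil_iff] at h2
  omega

lemma red_push (hk : 0 < k) (hl : 0 < l) (c : AB) {s : List AB} (hs : Red k l s) :
    Red k l (push k l c s) := by
  rw [push]
  split_ifs with h
  · exact fun c' hc' => hs c' (hc'.trans (List.drop_suffix _ _).isInfix)
  · intro c' hc'
    rw [List.infix_cons_iff] at hc'
    rcases hc' with hc' | hc'
    · have hcnt := cnt_pos hk hl c'
      obtain ⟨m, hm⟩ : ∃ m, cnt k l c' = m + 1 := ⟨_, (Nat.succ_pred_eq_of_pos hcnt).symm⟩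
      rw [hm, List.replicate_succ, List.cons_prefix_cons] at hc'
      obtain ⟨rfl, hpre⟩ := hc'
      apply h
      rwa [hm, Nat.add_sub_cancel]
    · exact hs c' hc'

lemma red_nf (hk : 0 < k) (hl : 0 < l) (w : List AB) : Red k l (nf k l w) := by
  induction w with
  | nil => exact red_nil hk hl
  | cons c t ih => exact red_push hk hl c ih

lemma nf_of_red (hk : 0 < k) (hl : 0 < l) {w : List AB} (h : Red k l w) : nf k l w = w := by
  induction w with
  | nil => rfl
  | cons c t ih =>
    have ht := ih (red_tail h)
    show push k l c (nf k l t) = c :: t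
    rw [ht, push, if_neg]
    intro hpre
    refine h c (List.IsPrefix.isInfix ?_)
    have hcnt := cnt_pos hk hl c
    obtain ⟨m, hm⟩ : ∃ m, cnt k l c = m + 1 := ⟨_, (Nat.succ_pred_eq_of_pos hcnt).symm⟩
    rw [hm, List.replicate_succ, List.cons_prefix_cons]
    exact ⟨rfl, by rwa [hm, Nat.add_sub_cancel] at hpre⟩

lemma foldr_push_replicate (c : AB) (n : ℕ) (s : List AB) :
    List.foldr (push k l) s (List.replicate n c) = (push k l c)^[n] s := by
  induction n with
  | zero => rfl
  | succ n ih => rw [List.replicate_succ, List.foldr_cons, ih, Function.iterate_succ_apply']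

lemma nf_append (x z : List AB) :
    nf k l (x ++ z) = List.foldr (push k l) (nf k l z) x := by
  rw [nf, nf, List.foldr_append]

lemma nf_step (hk : 0 < k) (hl : 0 < l) {w w' : List AB} (h : Step k l w w') :
    nf k l w' = nf k l w := by
  obtain ⟨c, x, y, rfl, rfl⟩ := step_iff.mp h
  have hL : nf k l (x ++ y) = List.foldr (push k l) (nf k l y) x := nf_append x y
  have hR : nf k l (x ++ List.replicate (cnt k l c) c ++ y)
      = List.foldr (push k l) (nf k l y) x := by
    rw [List.append_assoc, nf_append, nf_append, foldr_push_replicate,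
      pushes_cancel hk hl c (red_nf hk hl y)]
  rw [hL, hR]

lemma nf_reach (hk : 0 < k) (hl : 0 < l) {w v : List AB}
    (h : Relation.ReflTransGen (Step k l) w v) : nf k l v = nf k l w := by
  induction h with
  | refl => rfl
  | tail _ hstep ih => rw [nf_step hk hl hstep, ih]

lemma count_push (hk : 0 < k) (hl : 0 < l) (c c' : AB) (s : List AB) :
    ∃ m, List.count c' (c :: s) = List.count c' (push k l c s) + m * cnt k l c' := by
  have hcnt := cnt_pos hk hl c
  rw [push]
  split_ifs with h
  · obtain ⟨t, rfl⟩ := h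
    have hd : List.drop (cnt k l c - 1) (List.replicate (cnt k l c - 1) c ++ t) = t := by
      simp [List.drop_append]
    rw [hd]
    by_cases hcc : c' = c
    · subst hcc
      refine ⟨1, ?_⟩
      simp [List.count_cons, List.count_append, List.count_replicate]
      omega
    · refine ⟨0, ?_⟩
      have hbe : (c == c') = false := by
        cases c <;> cases c' <;> simp_all
      simp [List.count_cons, List.count_append, List.count_replicate, hbe]
  · exact ⟨0, by simp⟩

lemma count_nf (hk : 0 < k) (hl : 0 < l) (c' : AB) (w : List AB) :
    ∃ m, List.count c' w = List.count c' (nf k l w) + m * cnt k l c' := by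
  induction w with
  | nil => exact ⟨0, by simp [nf]⟩
  | cons c t ih =>
    obtain ⟨m₁, hm₁⟩ := ih
    obtain ⟨m₂, hm₂⟩ := count_push hk hl c c' (nf k l t)
    refine ⟨m₂ + m₁, ?_⟩
    have h1 : List.count c' (c :: t) = List.count c' (c :: nf k l t) + m₁ * cnt k l c' := by
      simp only [List.count_cons, hm₁]
      omega
    show List.count c' (c :: t) = List.count c' (push k l c (nf k l t)) + _
    rw [h1, hm₂]
    ring

/-- The canonical number of moves. -/
def N (k l : ℕ) (w : List AB) : ℕ :=
  (List.count AB.a w - List.count AB.a (nf k l w)) / k +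
  (List.count AB.b w - List.count AB.b (nf k l w)) / l

lemma N_of_red (hk : 0 < k) (hl : 0 < l) {w : List AB} (h : Red k l w) : N k l w = 0 := by
  rw [N, nf_of_red hk hl h]
  simp

lemma div_helper {n : ℕ} (hn : 0 < n) (A m : ℕ) : (A + m * n - A) / n = m := by
  rw [Nat.add_sub_cancel_left, Nat.mul_div_cancel m hn]

lemma N_step (hk : 0 < k) (hl : 0 < l) {w w' : List AB} (h : Step k l w w') :
    N k l w = N k l w' + 1 := by
  have hnf := nf_step hk hl h
  obtain ⟨c, x, y, rfl, rfl⟩ := step_iff.mp h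
  obtain ⟨ma, hma⟩ := count_nf hk hl AB.a (x ++ y)
  obtain ⟨mb, hmb⟩ := count_nf hk hl AB.b (x ++ y)
  simp only [cnt] at hma hmb
  rw [N, N, ← hnf]
  cases c
  · have hca : List.count AB.a (x ++ List.replicate (cnt k l AB.a) AB.a ++ y) =
        List.count AB.a (x ++ y) + k := by
      simp [List.count_append, List.count_replicate, cnt]
      omega
    have hcb : List.count AB.b (x ++ List.replicate (cnt k l AB.a) AB.a ++ y) =
        List.count AB.b (x ++ y) := by
      simp [List.count_append, List.count_replicate, cnt]
    rw [hca, hcb, hma, hmb]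
    have e1 : List.count AB.a (nf k l (x ++ y)) + ma * k + k
        = List.count AB.a (nf k l (x ++ y)) + (ma + 1) * k := by ring
    rw [e1]
    simp only [div_helper hk, div_helper hl]
    omega
  · have hca : List.count AB.a (x ++ List.replicate (cnt k l AB.b) AB.b ++ y) =
        List.count AB.a (x ++ y) := by
      simp [List.count_append, List.count_replicate, cnt]
    have hcb : List.count AB.b (x ++ List.replicate (cnt k l AB.b) AB.b ++ y) =
        List.count AB.b (x ++ y) + l := by
      simp [List.count_append, List.count_replicate, cnt]
      omega
    rw [hca, hcb, hma, hmb]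
    have e1 : List.count AB.b (nf k l (x ++ y)) + mb * l + l
        = List.count AB.b (nf k l (x ++ y)) + (mb + 1) * l := by ring
    rw [e1]
    simp only [div_helper hk, div_helper hl]
    omega

lemma step_length (hk : 0 < k) (hl : 0 < l) {w w' : List AB} (h : Step k l w w') :
    w'.length < w.length := by
  obtain ⟨c, x, y, rfl, rfl⟩ := step_iff.mp h
  have := cnt_pos hk hl c
  simp [List.length_append]
  omega

lemma play_N (hk : 0 < k) (hl : 0 < l) (w : List AB) : Play (Step k l) w (N k l w) := by
  by_cases hred : Red k l w
  · rw [N_of_red hk hl hred]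
    exact Play.final w (fun w' hs => (exists_step_iff_not_red.mp ⟨w', hs⟩) hred)
  · obtain ⟨w', hs⟩ := exists_step_iff_not_red.mpr hred
    rw [N_step hk hl hs]
    exact Play.move w w' _ hs (play_N hk hl w')
termination_by w.length
decreasing_by exact step_length hk hl hs

lemma play_eq_N (hk : 0 < k) (hl : 0 < l) {w : List AB} {m : ℕ}
    (hp : Play (Step k l) w m) : m = N k l w := by
  induction hp with
  | final w h => rw [N_of_red hk hl (red_of_no_step h)]
  | move w w' n hs hp ih => rw [N_step hk hl hs, ih]

lemma mex_empty : mex (∅ : Set ℕ) = 0 := by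
  simp only [mex]
  have h0 : (0 : ℕ) ∈ {n : ℕ | n ∉ (∅ : Set ℕ)} := by simp
  exact Nat.le_antisymm (Nat.sInf_le h0) (Nat.zero_le _)

lemma mex_singleton_zero : mex ({0} : Set ℕ) = 1 := by
  have hs : {n : ℕ | n ∉ ({0} : Set ℕ)} = {n : ℕ | n ≠ 0} := by ext n; simp
  simp only [mex]
  rw [hs]
  have h1 : (1 : ℕ) ∈ {n : ℕ | n ≠ 0} := by simp
  refine Nat.le_antisymm (Nat.sInf_le h1) ?_
  have hmem : sInf {n : ℕ | n ≠ 0} ∈ {n : ℕ | n ≠ 0} := Nat.sInf_mem ⟨1, h1⟩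
  have hne : sInf {n : ℕ | n ≠ 0} ≠ 0 := hmem
  omega

lemma mex_singleton_one : mex ({1} : Set ℕ) = 0 := by
  simp only [mex]
  have h0 : (0 : ℕ) ∈ {n : ℕ | n ∉ ({1} : Set ℕ)} := by simp
  exact Nat.le_antisymm (Nat.sInf_le h0) (Nat.zero_le _)

lemma grundy_eq (hk : 0 < k) (hl : 0 < l) (g : List AB → ℕ)
    (hg : IsGrundy (Step k l) g) (w : List AB) : g w = N k l w % 2 := by
  by_cases hred : Red k l w
  · have hempty : {w' | Step k l w w'} = (∅ : Set (List AB)) := by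
      ext w'
      simp only [Set.mem_setOf_eq, Set.mem_empty_iff_false, iff_false]
      exact fun hs => (exists_step_iff_not_red.mp ⟨w', hs⟩) hred
    rw [hg w, hempty, Set.image_empty, mex_empty, N_of_red hk hl hred]
  · obtain ⟨w₀, hs₀⟩ := exists_step_iff_not_red.mpr hred
    have hval : ∀ w', Step k l w w' → g w' = (N k l w - 1) % 2 := by
      intro w' hs
      have hrec := grundy_eq hk hl g hg w'
      have hN := N_step hk hl hs
      rw [hrec]
      congr 1
      omega
    have himg : g '' {w' | Step k l w w'} = {(N k l w - 1) % 2} := by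
      ext y
      constructor
      · rintro ⟨w', hs, rfl⟩
        simp [hval w' hs]
      · intro hy
        simp only [Set.mem_singleton_iff] at hy
        exact ⟨w₀, hs₀, by rw [hval w₀ hs₀, hy]⟩
    have hN₀ := N_step hk hl hs₀
    rw [hg w, himg]
    rcases Nat.mod_two_eq_zero_or_one (N k l w - 1) with hp | hp
    · rw [hp, mex_singleton_zero]
      omega
    · rw [hp, mex_singleton_one]
      omega
termination_by w.length
decreasing_by exact step_length hk hl hs

end RW

theorem stmt1 (k l : ℕ) (hk : 0 < k) (hl : 0 < l) (w : List AB) :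
    ∃ n : ℕ,
      (∀ m, Play (Step k l) w m ↔ m = n) ∧
      (∀ v : List AB, Relation.ReflTransGen (Step k l) w v → (∀ u, ¬ Step k l v u) →
        n = (w.count AB.a - v.count AB.a) / k + (w.count AB.b - v.count AB.b) / l) ∧
      (∀ g : List AB → ℕ, IsGrundy (Step k l) g → g w = n % 2) := by
  refine ⟨RW.N k l w, ?_, ?_, ?_⟩
  · intro m
    constructor
    · exact fun hp => RW.play_eq_N hk hl hp
    · rintro rfl
      exact RW.play_N hk hl w
  · intro v hreach hmax
    have hredv : RW.Red k l v := RW.red_of_no_step hmax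
    have hv : v = RW.nf k l w := by
      rw [← RW.nf_reach hk hl hreach, RW.nf_of_red hk hl hredv]
    rw [hv, RW.N]
  · intro g hg
    exact RW.grundy_eq hk hl g hg w
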